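/- Let (V,g) be an n-dimensional real inner product space with orthonormal basis (e_1,...,e_n), let T : V × V → V be an alternating bilinear map such that (X,Y,Z) ↦ g(T(X,Y),Z) is totally antisymmetric, let h be a symmetric bilinear form with associated g-self-adjoint endomorphism H (h(u,v) = g(Hu,v)), and set g_t := g + t·h, e_i(t) := (Id + tH)^{-1/2} e_i for |t| small enough that Id + tH is positive definite. Define f(t) := (1/6) Σ_{i,j} g_t( T(e_i(t), e_j(t)), T(e_i(t), e_j(t)) ). Then f is differentiable at t = 0 and f'(0) = -(1/6) Σ_{i,j} S(e_i,e_j) h(e_i,e_j), where S(X,Y) := Σ_k g(T(e_k,X), T(e_k,Y)). (This is the first variation formula d/dt|_{t=0} ‖T‖²_{g(t)} = -(1/6)(S,h)_g for the squared norm of the torsion form.) -/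

import Mathlib

/-!
Near `t = 0` the curve `E t` is forced to be the operator acting on the eigenvector `b k` of `H`
(eigenvalue `μ k`) by the scalar `(1 + t μ k)^(-1/2)`: both are square roots of `(Id + t H)⁻¹`
with positive quadratic form, they commute, and `(A - B)(A + B) = A² - B² = 0` with `A + B`
invertible. So `E` is differentiable at `0` with `E 0 = Id` and `E' 0 = -H/2`, and
`f'(0) = (1/6) Σ_{i,j} (-⟪T_ij, T(H e_i, e_j)⟫ - ⟪T_ij, T(e_i, H e_j)⟫ + h(T_ij, T_ij))`.
Each of the three double sums equals `(S, h)_g`: the first two after expanding `H e_j` in the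
basis (with `T(X, Y) = -T(Y, X)` for the first one), the third by Parseval together with the
antisymmetry of `⟪T X Y, Z⟫` in `Y, Z`.
-/

open scoped RealInnerProductSpace Topology

section DiagonalOperator

variable {V : Type*} [NormedAddCommGroup V] [InnerProductSpace ℝ V] {ι : Type*} [Fintype ι]
  (b : OrthonormalBasis ι ℝ V)

noncomputable def diagonalOperator (c : ι → ℝ) : V →ₗ[ℝ] V :=
  ∑ k, c k • (InnerProductSpace.rankOne ℝ (b k) (b k) : V →L[ℝ] V).toLinearMap

theorem diagonalOperator_apply (c : ι → ℝ) (v : V) :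
    diagonalOperator b c v = ∑ k, (c k * ⟪b k, v⟫) • b k := by
  simp [diagonalOperator, smul_smul]

theorem inner_diagonalOperator (c : ι → ℝ) (j : ι) (v : V) :
    ⟪b j, diagonalOperator b c v⟫ = c j * ⟪b j, v⟫ := by
  classical
  simp [diagonalOperator_apply, inner_sum, inner_smul_right, b.inner_eq_ite]

theorem diagonalOperator_apply_basis (c : ι → ℝ) (j : ι) :
    diagonalOperator b c (b j) = c j • b j := by
  classical
  simp [diagonalOperator_apply, b.inner_eq_ite]

theorem diagonalOperator_eq_of_apply_basis {A : V →ₗ[ℝ] V} {c : ι → ℝ}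
    (hA : ∀ k, A (b k) = c k • b k) : diagonalOperator b c = A :=
  b.toBasis.ext fun k => by simp [diagonalOperator_apply_basis, hA]

theorem inner_diagonalOperator_self_pos {c : ι → ℝ} (hc : ∀ k, 0 < c k) {u : V} (hu : u ≠ 0) :
    0 < ⟪diagonalOperator b c u, u⟫ := by
  obtain ⟨k, hk⟩ : ∃ k, ⟪b k, u⟫ ≠ 0 := by
    by_contra! h
    exact hu (by simpa [h] using (b.sum_repr' u).symm)
  have hsum : ⟪diagonalOperator b c u, u⟫ = ∑ j, c j * ⟪b j, u⟫ ^ 2 := by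
    rw [← b.sum_inner_mul_inner]
    refine Finset.sum_congr rfl fun j _ => ?_
    rw [real_inner_comm (b j), inner_diagonalOperator]
    ring
  rw [hsum]
  exact Finset.sum_pos' (fun j _ => by have := hc j; positivity)
    ⟨k, Finset.mem_univ k, by have := hc k; positivity⟩

theorem commute_diagonalOperator {A P : V →ₗ[ℝ] V} {p : ι → ℝ} (hP : P.IsSymmetric)
    (hPb : ∀ k, P (b k) = p k • b k) (hAP : Commute A P) (φ : ℝ → ℝ) :
    Commute A (diagonalOperator b fun k => φ (p k)) := by
  refine b.toBasis.ext fun k => InnerProductSpace.ext_inner_left_basis b.toBasis fun j => ?_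
  simp only [OrthonormalBasis.coe_toBasis, Module.End.mul_apply, diagonalOperator_apply_basis,
    map_smul, inner_smul_right, inner_diagonalOperator]
  have hspec : p j * ⟪b j, A (b k)⟫ = p k * ⟪b j, A (b k)⟫ := by
    calc p j * ⟪b j, A (b k)⟫ = ⟪P (b j), A (b k)⟫ := by rw [hPb, real_inner_smul_left]
      _ = ⟪b j, A (P (b k))⟫ := by rw [hP, ← Module.End.mul_apply, ← hAP.eq, Module.End.mul_apply]
      _ = p k * ⟪b j, A (b k)⟫ := by rw [hPb, map_smul, real_inner_smul_right]
  by_cases hjk : p j = p k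
  · rw [hjk]
  · have hzero : ⟪b j, A (b k)⟫ = 0 := by
      by_contra hne
      exact hjk (mul_right_cancel₀ hne hspec)
    rw [hzero, mul_zero, mul_zero]

theorem hasDerivAt_diagonalOperator_apply {c : ℝ → ι → ℝ} {c' : ι → ℝ} {t : ℝ}
    (hc : ∀ k, HasDerivAt (fun s => c s k) (c' k) t) (v : V) :
    HasDerivAt (fun s => diagonalOperator b (c s) v) (diagonalOperator b c' v) t := by
  simp only [diagonalOperator_apply]
  exact HasDerivAt.fun_sum fun k _ => ((hc k).mul_const _).smul_const (b k)

theorem hasDerivAt_diagonalOperator_rpow_apply {H : V →ₗ[ℝ] V} {μ : ι → ℝ}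
    (hb : ∀ k, H (b k) = μ k • b k) (v : V) :
    HasDerivAt (fun t => diagonalOperator b (fun k => (1 + t * μ k) ^ (-(1 / 2) : ℝ)) v)
      (-(1 / 2 : ℝ) • H v) 0 := by
  have hH : diagonalOperator b (fun k => -(1 / 2) * μ k) = -(1 / 2 : ℝ) • H :=
    diagonalOperator_eq_of_apply_basis b fun k => by simp [hb, smul_smul]
  rw [← LinearMap.smul_apply, ← hH]
  refine hasDerivAt_diagonalOperator_apply b (fun k => ?_) v
  refine ((((hasDerivAt_id (0 : ℝ)).mul_const (μ k)).const_add 1).rpow_const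
    (p := -(1 / 2)) (Or.inl (by simp))).congr_deriv ?_
  simp only [one_mul, one_div, mul_neg, id_eq, zero_mul, add_zero, Real.one_rpow, mul_one,
    neg_mul, neg_inj]
  ring

end DiagonalOperator

theorem commute_of_mul_self_mul_eq_one {M : Type*} [Monoid M] [IsDedekindFiniteMonoid M]
    {a p : M} (h : a * a * p = 1) : Commute a p :=
  calc a * p = p * (a * a) * (a * p) := by rw [mul_eq_one_comm.mp h, one_mul]
    _ = p * a * (a * a * p) := by simp only [mul_assoc]
    _ = p * a := by rw [h, mul_one]

section SquareRoot

variable {V : Type*} [NormedAddCommGroup V] [InnerProductSpace ℝ V] [FiniteDimensional ℝ V]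

theorem eq_of_mul_self_eq_of_commute {A B : V →ₗ[ℝ] V} (hAB : Commute A B) (h : A * A = B * B)
    (hA : ∀ u, u ≠ 0 → 0 < ⟪A u, u⟫) (hB : ∀ u, u ≠ 0 → 0 < ⟪B u, u⟫) : A = B := by
  have hfactor : (A - B) * (A + B) = 0 := by
    rw [sub_mul, mul_add, mul_add, hAB.eq, h]
    abel
  have hinj : Function.Injective (A + B) := by
    rw [← LinearMap.ker_eq_bot, LinearMap.ker_eq_bot']
    intro u hu
    by_contra hu0
    have hpos := add_pos (hA u hu0) (hB u hu0)
    rw [← inner_add_left, ← LinearMap.add_apply, hu, inner_zero_left] at hpos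
    exact lt_irrefl 0 hpos
  ext v
  obtain ⟨u, rfl⟩ := LinearMap.injective_iff_surjective.mp hinj v
  simpa [sub_eq_zero] using LinearMap.congr_fun hfactor u

variable {ι : Type*} [Fintype ι] (b : OrthonormalBasis ι ℝ V)

theorem eq_diagonalOperator_rpow_of_mul_self_mul_eq_one {E P : V →ₗ[ℝ] V} {p : ι → ℝ}
    (hP : P.IsSymmetric) (hPb : ∀ k, P (b k) = p k • b k) (hp : ∀ k, 0 < p k)
    (hE : E * E * P = 1) (hE_pos : ∀ u, u ≠ 0 → 0 < ⟪E u, u⟫) :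
    E = diagonalOperator b fun k => p k ^ (-(1 / 2) : ℝ) := by
  set D := diagonalOperator b fun k => p k ^ (-(1 / 2) : ℝ)
  have hDDP : D * D * P = 1 := by
    refine b.toBasis.ext fun k => ?_
    have hroot : p k * (p k ^ (-(1 / 2) : ℝ) * p k ^ (-(1 / 2) : ℝ)) = 1 := by
      rw [← Real.rpow_add (hp k)]
      norm_num [Real.rpow_neg_one, (hp k).ne']
    simp only [D, OrthonormalBasis.coe_toBasis, Module.End.mul_apply, hPb, map_smul,
      diagonalOperator_apply_basis, smul_smul, hroot, Module.End.one_apply, one_smul]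
  have hsq : E * E = D * D :=
    calc E * E = E * E * (P * (D * D)) := by rw [mul_eq_one_comm.mp hDDP, mul_one]
      _ = D * D := by rw [← mul_assoc, hE, one_mul]
  have hED := commute_diagonalOperator b hP hPb (commute_of_mul_self_mul_eq_one hE)
    (· ^ (-(1 / 2) : ℝ))
  exact eq_of_mul_self_eq_of_commute hED hsq hE_pos
    fun u hu => inner_diagonalOperator_self_pos b (fun k => Real.rpow_pos_of_pos (hp k) _) hu

theorem eventually_eq_diagonalOperator_rpow {E : ℝ → V →ₗ[ℝ] V} {H : V →ₗ[ℝ] V} {μ : ι → ℝ}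
    (hH : H.IsSymmetric) (hb : ∀ k, H (b k) = μ k • b k)
    (hE_pos : ∀ᶠ t in 𝓝 0, ∀ u, u ≠ 0 → 0 < ⟪E t u, u⟫)
    (hE_sq : ∀ᶠ t in 𝓝 0, E t * E t * (1 + t • H) = 1) :
    ∀ᶠ t in 𝓝 0, E t = diagonalOperator b fun k => (1 + t * μ k) ^ (-(1 / 2) : ℝ) := by
  have hpos : ∀ᶠ t in 𝓝 (0 : ℝ), ∀ k, 0 < 1 + t * μ k := Filter.eventually_all.2 fun k =>
    Filter.Tendsto.eventually_const_lt one_pos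
      ((continuous_const.add (continuous_id.mul continuous_const)).tendsto' 0 1 (by simp))
  filter_upwards [hE_pos, hE_sq, hpos] with t htpos htsq hp
  refine eq_diagonalOperator_rpow_of_mul_self_mul_eq_one b
    (LinearMap.IsSymmetric.id.add (hH.smul (by simp))) (fun k => ?_) hp htsq htpos
  simp [hb, add_smul, smul_smul]

end SquareRoot

section TorsionTrace

variable {V : Type*} [NormedAddCommGroup V] [InnerProductSpace ℝ V] {ι : Type*} [Fintype ι]
  (e : OrthonormalBasis ι ℝ V) (T : V →ₗ[ℝ] V →ₗ[ℝ] V)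

noncomputable def torsionGram (X Y : V) : ℝ := ∑ k, ⟪T (e k) X, T (e k) Y⟫

theorem OrthonormalBasis.bilinForm_apply_eq_sum (β : LinearMap.BilinForm ℝ V) (x y : V) :
    β x y = ∑ k, ∑ l, ⟪e k, x⟫ * ⟪e l, y⟫ * β (e k) (e l) := by
  conv_lhs => rw [← e.sum_repr' x, ← e.sum_repr' y]
  simp only [map_sum, map_smul, LinearMap.sum_apply, LinearMap.smul_apply, smul_eq_mul,
    Finset.mul_sum]
  rw [Finset.sum_comm]
  simp only [mul_left_comm, mul_assoc]

theorem sum_inner_torsion_map_right {H : V →ₗ[ℝ] V} {h : LinearMap.BilinForm ℝ V}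
    (hH : ∀ u v, h u v = ⟪H u, v⟫) :
    ∑ i, ∑ j, ⟪T (e i) (e j), T (e i) (H (e j))⟫ =
      ∑ i, ∑ j, torsionGram e T (e i) (e j) * h (e i) (e j) := by
  have hexpand : ∀ i j, ⟪T (e i) (e j), T (e i) (H (e j))⟫ =
      ∑ l, h (e j) (e l) * ⟪T (e i) (e j), T (e i) (e l)⟫ := by
    intro i j
    conv_lhs => rw [← e.sum_repr' (H (e j))]
    simp [map_sum, inner_sum, real_inner_smul_right, hH, real_inner_comm (H (e j))]
  simp only [hexpand, torsionGram, Finset.sum_mul]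
  rw [Finset.sum_comm_cycle, Finset.sum_comm_cycle]
  exact Finset.sum_congr rfl fun _ _ => Finset.sum_congr rfl fun _ _ =>
    Finset.sum_congr rfl fun _ _ => mul_comm _ _

theorem sum_inner_torsion_map_left (hT : T.IsAlt) {H : V →ₗ[ℝ] V}
    {h : LinearMap.BilinForm ℝ V} (hH : ∀ u v, h u v = ⟪H u, v⟫) :
    ∑ i, ∑ j, ⟪T (e i) (e j), T (H (e i)) (e j)⟫ =
      ∑ i, ∑ j, torsionGram e T (e i) (e j) * h (e i) (e j) := by
  rw [← sum_inner_torsion_map_right e T hH, Finset.sum_comm]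
  refine Finset.sum_congr rfl fun j _ => Finset.sum_congr rfl fun i _ => ?_
  rw [← hT.neg (e j), ← hT.neg (H (e i)), inner_neg_left, inner_neg_right]

theorem sum_bilinForm_torsion (hT : ∀ X Y Z, ⟪T X Y, Z⟫ = -⟪T X Z, Y⟫)
    (β : LinearMap.BilinForm ℝ V) :
    ∑ i, ∑ j, β (T (e i) (e j)) (T (e i) (e j)) =
      ∑ k, ∑ l, torsionGram e T (e k) (e l) * β (e k) (e l) := by
  have hgram : ∀ k l, ∑ i, ∑ j, ⟪e k, T (e i) (e j)⟫ * ⟪e l, T (e i) (e j)⟫ =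
      torsionGram e T (e k) (e l) := by
    intro k l
    refine Finset.sum_congr rfl fun i _ => ?_
    rw [← e.sum_inner_mul_inner]
    refine Finset.sum_congr rfl fun j _ => ?_
    rw [real_inner_comm _ (e k), real_inner_comm _ (e l), hT, hT _ _ (e l),
      real_inner_comm (T (e i) (e l)) (e j), neg_mul_neg]
  simp only [e.bilinForm_apply_eq_sum β (T _ _), ← hgram, Finset.sum_mul]
  rw [Finset.sum_comm_cycle]
  exact Finset.sum_congr rfl fun _ _ => Finset.sum_comm_cycle

theorem sum_torsion_variation (hT_alt : T.IsAlt) (hT_anti : ∀ X Y Z, ⟪T X Y, Z⟫ = -⟪T X Z, Y⟫)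
    {H : V →ₗ[ℝ] V} {h : LinearMap.BilinForm ℝ V} (hH : ∀ u v, h u v = ⟪H u, v⟫) :
    ∑ i, ∑ j, (2 * ⟪T (e i) (e j), T (e i) (-(1 / 2 : ℝ) • H (e j)) +
        T (-(1 / 2 : ℝ) • H (e i)) (e j)⟫ + h (T (e i) (e j)) (T (e i) (e j))) =
      -∑ i, ∑ j, torsionGram e T (e i) (e j) * h (e i) (e j) := by
  simp only [map_smul, LinearMap.smul_apply, inner_add_right, real_inner_smul_right, mul_add,
    ← mul_assoc, show (2 : ℝ) * -(1 / 2) = -1 by norm_num, neg_one_mul, Finset.sum_add_distrib,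
    Finset.sum_neg_distrib]
  rw [sum_inner_torsion_map_right e T hH, sum_inner_torsion_map_left e T hT_alt hH,
    sum_bilinForm_torsion e T hT_anti h]
  ring

end TorsionTrace

theorem LinearMap.hasDerivAt_of_bilinear {𝕜 : Type*} [NontriviallyNormedField 𝕜] [CompleteSpace 𝕜]
    {E F G : Type*} [NormedAddCommGroup E] [NormedSpace 𝕜 E] [FiniteDimensional 𝕜 E]
    [NormedAddCommGroup F] [NormedSpace 𝕜 F] [FiniteDimensional 𝕜 F]
    [NormedAddCommGroup G] [NormedSpace 𝕜 G]
    (B : E →ₗ[𝕜] F →ₗ[𝕜] G) {u : 𝕜 → E} {v : 𝕜 → F} {u' : E} {v' : F} {x : 𝕜}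
    (hu : HasDerivAt u u' x) (hv : HasDerivAt v v' x) :
    HasDerivAt (fun t => B (u t) (v t)) (B (u x) v' + B u' (v x)) x :=
  B.toContinuousBilinearMap.hasDerivAt_of_bilinear (fun _ => hu) fun _ => hv

theorem hasDerivAt_inner_self_add_mul_apply_self {V : Type*} [NormedAddCommGroup V]
    [InnerProductSpace ℝ V] [FiniteDimensional ℝ V] (β : LinearMap.BilinForm ℝ V) {w : ℝ → V}
    {w' : V} (hw : HasDerivAt w w' 0) :
    HasDerivAt (fun t => ⟪w t, w t⟫ + t * β (w t) (w t)) (2 * ⟪w 0, w'⟫ + β (w 0) (w 0)) 0 := by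
  refine ((hw.inner ℝ hw).add ((hasDerivAt_id 0).mul (β.hasDerivAt_of_bilinear hw hw))).congr_deriv
    ?_
  simp only [real_inner_comm w', one_mul, zero_mul, add_zero, add_left_inj]
  ring

theorem hasDerivAt_normSq_torsion_general
    {V : Type*} [NormedAddCommGroup V] [InnerProductSpace ℝ V] [FiniteDimensional ℝ V]
    {n : ℕ} (e : OrthonormalBasis (Fin n) ℝ V)
    (T : V →ₗ[ℝ] V →ₗ[ℝ] V)
    (hT_alt : ∀ u : V, T u u = 0)
    (hT_anti : ∀ X Y Z : V, ⟪T X Y, Z⟫ = -⟪T X Z, Y⟫)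
    (h : LinearMap.BilinForm ℝ V)
    (h_symm : ∀ u v : V, h u v = h v u)
    (H : V →ₗ[ℝ] V)
    (hH : ∀ u v : V, h u v = ⟪H u, v⟫)
    (E : ℝ → V →ₗ[ℝ] V) (δ : ℝ) (hδ : 0 < δ)
    (hE_pos : ∀ t : ℝ, |t| < δ → ∀ u : V, u ≠ 0 → 0 < ⟪E t u, u⟫)
    (hE_sq : ∀ t : ℝ, |t| < δ →
      (E t ∘ₗ E t) ∘ₗ (LinearMap.id + t • H) = LinearMap.id) :
    HasDerivAt
      (fun t : ℝ => (1 / 6 : ℝ) * ∑ i : Fin n, ∑ j : Fin n,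
        (⟪T (E t (e i)) (E t (e j)), T (E t (e i)) (E t (e j))⟫ +
          t * h (T (E t (e i)) (E t (e j))) (T (E t (e i)) (E t (e j)))))
      (-(1 / 6 : ℝ) * ∑ i : Fin n, ∑ j : Fin n,
        (∑ k : Fin n, ⟪T (e k) (e i), T (e k) (e j)⟫) * h (e i) (e j)) 0 := by
  have hHsymm : H.IsSymmetric := fun u v => by rw [← hH, h_symm, hH, real_inner_comm]
  have hsmall : ∀ᶠ t in 𝓝 (0 : ℝ), |t| < δ :=
    (continuous_abs.tendsto' 0 0 abs_zero).eventually_lt_const hδ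
  have hE := eventually_eq_diagonalOperator_rpow (hHsymm.eigenvectorBasis rfl) hHsymm
    (hHsymm.apply_eigenvectorBasis rfl) (hsmall.mono hE_pos) (hsmall.mono hE_sq)
  have hE0 : ∀ v, E 0 v = v := fun v => by
    simp [hE.self_of_nhds, diagonalOperator_apply, OrthonormalBasis.sum_repr']
  have hcurve : ∀ v, HasDerivAt (fun t => E t v) (-(1 / 2 : ℝ) • H v) 0 := fun v =>
    (hasDerivAt_diagonalOperator_rpow_apply _ (hHsymm.apply_eigenvectorBasis rfl) v)
      |>.congr_of_eventuallyEq (hE.mono fun t ht => by simp only [ht])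
  have hw : ∀ i j, HasDerivAt (fun t => T (E t (e i)) (E t (e j)))
      (T (e i) (-(1 / 2 : ℝ) • H (e j)) + T (-(1 / 2 : ℝ) • H (e i)) (e j)) 0 := fun i j => by
    simpa [hE0] using T.hasDerivAt_of_bilinear (hcurve (e i)) (hcurve (e j))
  refine ((HasDerivAt.fun_sum fun i _ => HasDerivAt.fun_sum fun j _ =>
    hasDerivAt_inner_self_add_mul_apply_self h (hw i j)).const_mul (1 / 6 : ℝ)).congr_deriv ?_
  simp only [hE0, sum_torsion_variation e T hT_alt hT_anti hH, torsionGram]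
  ring

/-- First variation of the squared norm of the torsion form. Let `(V, g)` be an
`n`-dimensional real inner product space with orthonormal basis `(e i)`, `T` an alternating
bilinear map with `(X, Y, Z) ↦ ⟪T X Y, Z⟫` totally antisymmetric, `h` a symmetric bilinear
form with associated `g`-self-adjoint endomorphism `H`, and, for `|t| < δ`,
`E t = (Id + t • H)^{-1/2}` (i.e. `E t` is `g`-self-adjoint, positive definite, and
`(E t)² ∘ (Id + t • H) = Id`), so that `e_i(t) := E t (e i)` is a `g_t`-orthonormal basis
for `g_t := g + t • h`. Then
`f(t) := (1/6) Σ_{i,j} g_t(T(e_i(t), e_j(t)), T(e_i(t), e_j(t)))`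
is differentiable at `t = 0` with `f'(0) = -(1/6) Σ_{i,j} S(e_i, e_j) h(e_i, e_j)`,
where `S(X, Y) := Σ_k ⟪T(e_k, X), T(e_k, Y)⟫`. -/
theorem hasDerivAt_normSq_torsion
    {V : Type*} [NormedAddCommGroup V] [InnerProductSpace ℝ V] [FiniteDimensional ℝ V]
    {n : ℕ} (e : OrthonormalBasis (Fin n) ℝ V)
    (T : V →ₗ[ℝ] V →ₗ[ℝ] V)
    (hT_alt : ∀ u : V, T u u = 0)
    (hT_anti : ∀ X Y Z : V, ⟪T X Y, Z⟫ = -⟪T X Z, Y⟫)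
    (h : LinearMap.BilinForm ℝ V)
    (h_symm : ∀ u v : V, h u v = h v u)
    (H : V →ₗ[ℝ] V)
    (hH : ∀ u v : V, h u v = ⟪H u, v⟫)
    (E : ℝ → V →ₗ[ℝ] V) (δ : ℝ) (hδ : 0 < δ)
    (hE_sa : ∀ t : ℝ, |t| < δ → ∀ u v : V, ⟪E t u, v⟫ = ⟪u, E t v⟫)
    (hE_pos : ∀ t : ℝ, |t| < δ → ∀ u : V, u ≠ 0 → 0 < ⟪E t u, u⟫)
    (hE_sq : ∀ t : ℝ, |t| < δ →
      (E t ∘ₗ E t) ∘ₗ (LinearMap.id + t • H) = LinearMap.id) :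
    HasDerivAt
      (fun t : ℝ => (1 / 6 : ℝ) * ∑ i : Fin n, ∑ j : Fin n,
        (⟪T (E t (e i)) (E t (e j)), T (E t (e i)) (E t (e j))⟫ +
          t * h (T (E t (e i)) (E t (e j))) (T (E t (e i)) (E t (e j)))))
      (-(1 / 6 : ℝ) * ∑ i : Fin n, ∑ j : Fin n,
        (∑ k : Fin n, ⟪T (e k) (e i), T (e k) (e j)⟫) * h (e i) (e j)) 0 :=
  hasDerivAt_normSq_torsion_general e T hT_alt hT_anti h h_symm H hH E δ hδ hE_pos hE_sq
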